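/- arXiv:2011.05472 — 2 statements merged into one kernel-verified Lean document; each statement's English description precedes it below -/
import Mathlib

section
/- Let G be a finite multidigraph with a subgraph H with vertex set W whose underlying multigraph is two-edge-connected. If π is a partition of the vertex set of G such that the quotient G^π is an oriented cactus, then the quotient H^{π|_W} is also an oriented cactus. -/
set_option autoImplicit false

/-! ## Multigraphs -/

/-- A multigraph: a vertex type `V`, an edge type `E`, and an assignment to each edge of
its unordered pair of endpoints.  Loops and parallel edges are allowed. -/
structure Multigraph (V E : Type) where
  ends : E → Sym2 V

namespace Multigraph

variable {V E : Type}

/-- `G.ReachAvoid F u v` : `v` can be reached from `u` by a walk using no edge of `F`. -/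
inductive ReachAvoid (G : Multigraph V E) (F : Set E) : V → V → Prop
  | refl (v : V) : ReachAvoid G F v v
  | tail {u v w : V} (e : E) (he : e ∉ F) (hvw : G.ends e = s(v, w))
      (h : ReachAvoid G F u v) : ReachAvoid G F u w

/-- A multigraph is connected if any two vertices are joined by a walk. -/
def Connected (G : Multigraph V E) : Prop := ∀ u v : V, G.ReachAvoid ∅ u v

/-- `F` is a set of edges whose deletion disconnects `v` from `w`. -/
def IsEdgeCut (G : Multigraph V E) (v w : V) (F : Set E) : Prop := ¬ G.ReachAvoid F v w

/-- Edge connectivity `λ(v, w)`: the minimum number of edges whose deletion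
disconnects `v` from `w`. -/
noncomputable def edgeConn (G : Multigraph V E) (v w : V) : ℕ :=
  sInf {k : ℕ | ∃ F : Finset E, F.card = k ∧ G.IsEdgeCut v w ↑F}

/-- Walks in a multigraph, recorded together with the edges they traverse. -/
inductive Walk (G : Multigraph V E) : V → V → Type
  | nil (v : V) : Walk G v v
  | cons {u v w : V} (e : E) (huv : G.ends e = s(u, v)) (p : Walk G v w) : Walk G u w

namespace Walk

variable {G : Multigraph V E}

/-- The list of edges traversed by a walk. -/
def edges : ∀ {u v : V}, G.Walk u v → List E
  | _, _, .nil _ => []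
  | _, _, .cons e _ p => e :: edges p

/-- The list of vertices visited by a walk (including both endpoints). -/
def verts : ∀ {u v : V}, G.Walk u v → List V
  | _, v, .nil _ => [v]
  | u, _, .cons _ _ p => u :: verts p

/-- A walk is a path if it visits no vertex twice. -/
def IsPath {u v : V} (p : G.Walk u v) : Prop := p.verts.Nodup

end Walk

/-- `S` is the edge set of a simple cycle of `G`: a nonempty closed walk with no repeated
edges and no repeated vertices (other than the final return to the starting point).
A loop is a simple cycle of length one. -/
def IsSimpleCycleOn [DecidableEq E] (G : Multigraph V E) (S : Finset E) : Prop :=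
  ∃ (v : V) (p : G.Walk v v),
    p.edges ≠ [] ∧ p.edges.Nodup ∧ p.verts.dropLast.Nodup ∧ p.edges.toFinset = S

/-- A cactus: a connected multigraph in which every edge lies on exactly one simple cycle
(simple cycles being identified with their edge sets). -/
def IsCactus [DecidableEq E] (G : Multigraph V E) : Prop :=
  G.Connected ∧ ∀ e : E, ∃! S : Finset E, G.IsSimpleCycleOn S ∧ e ∈ S

/-- Two-edge-connected: connected, and still connected after deleting any single edge. -/
def TwoEdgeConnected (G : Multigraph V E) : Prop :=
  G.Connected ∧ ∀ (e : E) (u v : V), G.ReachAvoid {e} u v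

/-- The quotient multigraph by a partition (setoid) of the vertices: the vertices are the
blocks, and each edge joins the blocks of its original endpoints. -/
def quot (G : Multigraph V E) (σ : Setoid V) : Multigraph (Quotient σ) E :=
  ⟨fun e => (G.ends e).map (Quotient.mk σ)⟩

/-- Degree of a vertex: the number of edge-incidences at it (loops count twice). -/
def degree [DecidableEq V] [Fintype E] (G : Multigraph V E) (v : V) : ℕ :=
  ∑ e : E,
    Sym2.lift
      ⟨fun a b => (if a = v then 1 else 0) + (if b = v then 1 else 0),
        fun _ _ => add_comm _ _⟩ (G.ends e)

/-- A leaf is a vertex of degree one. -/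
def IsLeaf [DecidableEq V] [Fintype E] (G : Multigraph V E) (v : V) : Prop :=
  G.degree v = 1

/-- A tree: a connected multigraph with no simple cycles. -/
def IsTree [DecidableEq E] (G : Multigraph V E) : Prop :=
  G.Connected ∧ ∀ S : Finset E, ¬ G.IsSimpleCycleOn S

end Multigraph

/-- An embedding of the multigraph `H` into `G`, realizing `H` as a subgraph of `G`. -/
structure Multigraph.Embedding {W F V E : Type} (H : Multigraph W F) (G : Multigraph V E) where
  vmap : W → V
  emap : F → E
  vmap_inj : Function.Injective vmap
  emap_inj : Function.Injective emap
  ends_map : ∀ f : F, G.ends (emap f) = (H.ends f).map vmap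

/-! ## Multidigraphs -/

/-- A multidigraph: vertex type `V`, edge type `E`, and source and target maps. -/
structure Multidigraph (V E : Type) where
  src : E → V
  tgt : E → V

namespace Multidigraph

variable {V E : Type}

/-- The underlying multigraph of a multidigraph. -/
def toMultigraph (D : Multidigraph V E) : Multigraph V E :=
  ⟨fun e => s(D.src e, D.tgt e)⟩

/-- Directed walks in a multidigraph. -/
inductive DiWalk (D : Multidigraph V E) : V → V → Type
  | nil (v : V) : DiWalk D v v
  | cons {u v w : V} (e : E) (hs : D.src e = u) (ht : D.tgt e = v)
      (p : DiWalk D v w) : DiWalk D u w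

namespace DiWalk

variable {D : Multidigraph V E}

/-- The list of edges traversed by a directed walk. -/
def edges : ∀ {u v : V}, D.DiWalk u v → List E
  | _, _, .nil _ => []
  | _, _, .cons e _ _ p => e :: edges p

/-- The list of vertices visited by a directed walk. -/
def verts : ∀ {u v : V}, D.DiWalk u v → List V
  | _, v, .nil _ => [v]
  | u, _, .cons _ _ _ p => u :: verts p

end DiWalk

/-- `S` is the edge set of a simple directed cycle of `D`. -/
def IsDiCycleOn [DecidableEq E] (D : Multidigraph V E) (S : Finset E) : Prop :=
  ∃ (v : V) (p : D.DiWalk v v),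
    p.edges ≠ [] ∧ p.edges.Nodup ∧ p.verts.dropLast.Nodup ∧ p.edges.toFinset = S

/-- An oriented cactus: the underlying multigraph is a cactus and each of its simple
cycles (pads) is a directed cycle. -/
def IsOrientedCactus [DecidableEq E] (D : Multidigraph V E) : Prop :=
  D.toMultigraph.IsCactus ∧
    ∀ S : Finset E, D.toMultigraph.IsSimpleCycleOn S → D.IsDiCycleOn S

/-- The quotient multidigraph by a partition (setoid) of the vertices. -/
def quot (D : Multidigraph V E) (σ : Setoid V) : Multidigraph (Quotient σ) E where
  src := fun e => Quotient.mk σ (D.src e)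
  tgt := fun e => Quotient.mk σ (D.tgt e)

/-- Indegree of a vertex: the number of edges with target `v`. -/
def indeg [DecidableEq V] [Fintype E] (D : Multidigraph V E) (v : V) : ℕ :=
  (Finset.univ.filter fun e => D.tgt e = v).card

/-- Outdegree of a vertex: the number of edges with source `v`. -/
def outdeg [DecidableEq V] [Fintype E] (D : Multidigraph V E) (v : V) : ℕ :=
  (Finset.univ.filter fun e => D.src e = v).card

end Multidigraph

/-- An embedding of the multidigraph `H` into `G`, realizing `H` as a subgraph of `G`. -/
structure Multidigraph.Embedding {W F V E : Type}
    (H : Multidigraph W F) (G : Multidigraph V E) where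
  vmap : W → V
  emap : F → E
  vmap_inj : Function.Injective vmap
  emap_inj : Function.Injective emap
  src_map : ∀ f : F, G.src (emap f) = vmap (H.src f)
  tgt_map : ∀ f : F, G.tgt (emap f) = vmap (H.tgt f)

/-! ## Cycle graphs and non-crossing partitions -/

/-- The cycle graph of length `n`: vertices `Fin n`, edges `Fin n`, edge `i` joining
`v i` and `v (i+1)` (indices mod `n`). -/
def cycleGraph (n : ℕ) [NeZero n] : Multigraph (Fin n) (Fin n) :=
  ⟨fun i => s(i, i + 1)⟩

/-- The cycle graph of length `n` in which each edge carries an orientation: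
edge `i` is oriented counterclockwise (from `v i` to `v (i+1)`) if `orient i = true`,
and clockwise otherwise. -/
def cycleDigraph (n : ℕ) [NeZero n] (orient : Fin n → Bool) : Multidigraph (Fin n) (Fin n) where
  src := fun i => if orient i then i else i + 1
  tgt := fun i => if orient i then i + 1 else i

/-- A relation (e.g. a partition) on `Fin m` is non-crossing if there are no indices
`i₁ < i₂ < i₃ < i₄` with `i₁, i₃` in one block and `i₂, i₄` in a different block. -/
def NonCrossingRel {m : ℕ} (r : Fin m → Fin m → Prop) : Prop :=
  ¬ ∃ i₁ i₂ i₃ i₄ : Fin m, i₁ < i₂ ∧ i₂ < i₃ ∧ i₃ < i₄ ∧ r i₁ i₃ ∧ r i₂ i₄ ∧ ¬ r i₁ i₂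

/-- The union of a partition `σ` of the vertices `v₁, …, vₙ` (at the even positions) and
a partition `κ` of the edges `e₁, …, eₙ` (at the odd positions) of a cycle, as a relation
on the `2n` interlaced points `v₁, e₁, v₂, e₂, …, vₙ, eₙ`. -/
def interRel {n : ℕ} (σ κ : Setoid (Fin n)) (x y : Fin (2 * n)) : Prop :=
  (x.val % 2 = 0 ∧ y.val % 2 = 0 ∧
    σ.r ⟨x.val / 2, by have := x.isLt; omega⟩ ⟨y.val / 2, by have := y.isLt; omega⟩) ∨
  (x.val % 2 = 1 ∧ y.val % 2 = 1 ∧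
    κ.r ⟨x.val / 2, by have := x.isLt; omega⟩ ⟨y.val / 2, by have := y.isLt; omega⟩)

/-- `κ` is the Kreweras complement of `σ`: the largest partition of the edges such that
the union `σ ∪ κ` is non-crossing with respect to the interlaced (cyclic) order. -/
def IsKrewerasComplement {n : ℕ} (σ κ : Setoid (Fin n)) : Prop :=
  NonCrossingRel (interRel σ κ) ∧
    ∀ κ' : Setoid (Fin n), NonCrossingRel (interRel σ κ') → κ' ≤ κ

open Classical in
/-- The block of the partition `κ` containing `i`, as a finite set. -/
noncomputable def setoidClass {n : ℕ} (κ : Setoid (Fin n)) (i : Fin n) : Finset (Fin n) :=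
  Finset.univ.filter fun j => κ.r i j

open Fin.NatCast in
/-- `j` is the next element of `B` encountered strictly after `i` in the cyclic order of
`Fin n` (if `B = {i}` then `j = i` itself, one full turn later). -/
def CyclicNextIn {n : ℕ} [NeZero n] (B : Finset (Fin n)) (i j : Fin n) : Prop :=
  i ∈ B ∧ j ∈ B ∧ ∃ d : ℕ, 0 < d ∧ d ≤ n ∧ j = i + (d : Fin n) ∧
    ∀ d' : ℕ, 0 < d' → d' < d → i + (d' : Fin n) ∉ B

/-! ## Wedges of two (di)graphs at their roots -/

/-- The canonical map from the vertices of `t'` into the wedge vertex type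
`V ⊕ {x : V' // x ≠ ρ'}`, sending the root `ρ'` to (the image of) `ρ`. -/
def wedgeJ {V V' : Type} [DecidableEq V'] (ρ : V) (ρ' : V') :
    V' → V ⊕ {x : V' // x ≠ ρ'} :=
  fun x => if h : x = ρ' then Sum.inl ρ else Sum.inr ⟨x, h⟩

/-- The wedge of two multigraphs `t`, `t'` obtained by identifying `ρ ∈ t` with `ρ' ∈ t'`. -/
def Multigraph.wedge {V E V' E' : Type} [DecidableEq V']
    (t : Multigraph V E) (t' : Multigraph V' E') (ρ : V) (ρ' : V') :
    Multigraph (V ⊕ {x : V' // x ≠ ρ'}) (E ⊕ E') :=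
  ⟨fun e =>
    match e with
    | Sum.inl e => (t.ends e).map Sum.inl
    | Sum.inr e => (t'.ends e).map (wedgeJ ρ ρ')⟩

/-- The wedge of two multidigraphs `t`, `t'` obtained by identifying `ρ ∈ t` with `ρ' ∈ t'`. -/
def Multidigraph.wedge {V E V' E' : Type} [DecidableEq V']
    (t : Multidigraph V E) (t' : Multidigraph V' E') (ρ : V) (ρ' : V') :
    Multidigraph (V ⊕ {x : V' // x ≠ ρ'}) (E ⊕ E') where
  src := fun e =>
    match e with
    | Sum.inl e => Sum.inl (t.src e)
    | Sum.inr e => wedgeJ ρ ρ' (t'.src e)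
  tgt := fun e =>
    match e with
    | Sum.inl e => Sum.inl (t.tgt e)
    | Sum.inr e => wedgeJ ρ ρ' (t'.tgt e)

/-! ## Flowers (a cycle with graphs attached) and stars (trees wedged at a common root) -/

/-- The canonical map from the vertices of the `i`-th attached graph into the flower,
sending the basepoint `b i` to the cycle vertex `i`. -/
def flowerJ {n : ℕ} {W : Fin n → Type} [∀ i, DecidableEq (W i)]
    (b : ∀ i, W i) (i : Fin n) :
    W i → Fin n ⊕ (Σ i, {x : W i // x ≠ b i}) :=
  fun x => if h : x = b i then Sum.inl i else Sum.inr ⟨i, x, h⟩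

/-- The flower: a cycle of length `n` with the multigraph `d i` attached at the cycle
vertex `i` via its basepoint `b i`; the attached graphs are disjoint except through the
cycle, and `d i` meets the cycle exactly in the vertex `i`. -/
def flowerGraph {n : ℕ} [NeZero n] {W F : Fin n → Type} [∀ i, DecidableEq (W i)]
    (d : ∀ i, Multigraph (W i) (F i)) (b : ∀ i, W i) :
    Multigraph (Fin n ⊕ (Σ i, {x : W i // x ≠ b i})) (Fin n ⊕ (Σ i, F i)) :=
  ⟨fun e =>
    match e with
    | Sum.inl k => s(Sum.inl k, Sum.inl (k + 1))
    | Sum.inr ⟨i, f⟩ => ((d i).ends f).map (flowerJ b i)⟩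

/-- The canonical map from the vertices of the `i`-th tree into the star, sending the
root `r i` to the common amalgamated root. -/
def starJ {n : ℕ} {W : Fin n → Type} [∀ i, DecidableEq (W i)]
    (r : ∀ i, W i) (i : Fin n) :
    W i → Unit ⊕ (Σ i, {x : W i // x ≠ r i}) :=
  fun x => if h : x = r i then Sum.inl () else Sum.inr ⟨i, x, h⟩

/-- The star: the disjoint union of the multigraphs `t i` with all the roots `r i`
identified to a single vertex. -/
def starGraph {n : ℕ} {W F : Fin n → Type} [∀ i, DecidableEq (W i)]
    (t : ∀ i, Multigraph (W i) (F i)) (r : ∀ i, W i) :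
    Multigraph (Unit ⊕ (Σ i, {x : W i // x ≠ r i})) (Σ i, F i) :=
  ⟨fun e => ((t e.1).ends e.2).map (starJ r e.1)⟩

/-! ## Graphs of matrices -/

/-- The partition of `V` identifying the input `vin` with the output `vout` (and nothing
else). -/
def rootSetoid {V : Type} (vin vout : V) : Setoid V where
  r a b := a = b ∨ ((a = vin ∨ a = vout) ∧ (b = vin ∨ b = vout))
  iseqv := by
    constructor
    · intro x; exact Or.inl rfl
    · rintro x y (rfl | ⟨hx, hy⟩)
      · exact Or.inl rfl
      · exact Or.inr ⟨hy, hx⟩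
    · rintro x y z (rfl | ⟨hx, hy⟩) (rfl | ⟨hy', hz⟩)
      · exact Or.inl rfl
      · exact Or.inr ⟨hy', hz⟩
      · exact Or.inr ⟨hx, hy⟩
      · exact Or.inr ⟨hx, hz⟩

/-- The graph of matrices `Z_g(A₁, …, A_K)` associated to a bi-rooted multidigraph `g`
with input `vin`, output `vout` and edge ordering `o`. -/
noncomputable def graphOfMatrices {V E : Type} [Fintype V] [Fintype E] [DecidableEq V] {K N : ℕ}
    (g : Multidigraph V E) (vin vout : V) (o : E ≃ Fin K)
    (A : Fin K → Matrix (Fin N) (Fin N) ℂ) : Matrix (Fin N) (Fin N) ℂ :=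
  Matrix.of fun i j =>
    ∑ φ : V → Fin N,
      if φ vout = i ∧ φ vin = j then ∏ e : E, A (o e) (φ (g.tgt e)) (φ (g.src e)) else 0

/-! ## Set partitions as finite set systems -/

/-- `P` is a partition of the (finite) type `V`: its blocks are nonempty and every
element of `V` lies in exactly one block. -/
def IsPartitionOf (V : Type) [DecidableEq V] (P : Finset (Finset V)) : Prop :=
  (∀ B ∈ P, B.Nonempty) ∧ ∀ v : V, ∃! B, B ∈ P ∧ v ∈ B

/-- The block of the partition `P` containing `v`. -/
def blockOf {V : Type} [DecidableEq V] (P : Finset (Finset V)) (hP : IsPartitionOf V P)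
    (v : V) : {B : Finset V // B ∈ P} :=
  ⟨Finset.choose (fun B => v ∈ B) P (hP.2 v),
    Finset.choose_mem (fun B => v ∈ B) P (hP.2 v)⟩


/-! The embedding `H → G` descends to an embedding `H^{π|_W} → G^π`, and two-edge-connectivity
passes to quotients. In a two-edge-connected multigraph every edge `e` lies on a simple cycle:
a path between the ends of `e` avoiding `e`, closed up by `e`. Embeddings map simple cycles
injectively to simple cycles, so uniqueness of the cycle through `e` is inherited from the
cactus `G^π`, and the directed cycle of `G^π` on the image of a cycle of `H^{π|_W}` pulls back
to a directed cycle of `H^{π|_W}`. -/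

namespace Multigraph

variable {V E : Type} {G : Multigraph V E}

namespace Walk

lemma start_mem_verts : ∀ {u v : V} (p : G.Walk u v), u ∈ p.verts
  | _, _, .nil _ => List.mem_singleton_self _
  | _, _, .cons _ _ _ => List.mem_cons_self

lemma verts_eq_dropLast_append : ∀ {u v : V} (p : G.Walk u v),
    p.verts = p.verts.dropLast ++ [v]
  | _, _, .nil _ => rfl
  | _, _, .cons _ _ (.nil _) => rfl
  | _, _, .cons _ _ (.cons e h p) => by
      rw [verts, List.dropLast_cons_of_ne_nil (by simp [verts]), List.cons_append]
      exact congrArg _ (verts_eq_dropLast_append (.cons e h p))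

lemma mem_verts_of_mem_ends : ∀ {u v : V} (p : G.Walk u v) {e : E} {x : V},
    e ∈ p.edges → x ∈ G.ends e → x ∈ p.verts
  | _, _, .nil _, _, _, he, _ => by simp [edges] at he
  | _, _, .cons e' h p, _, _, he, hx => by
      rw [edges, List.mem_cons] at he
      rcases he with rfl | he
      · rw [h, Sym2.mem_iff] at hx
        rcases hx with rfl | rfl
        · exact List.mem_cons_self
        · exact List.mem_cons_of_mem _ p.start_mem_verts
      · exact List.mem_cons_of_mem _ (p.mem_verts_of_mem_ends he hx)

lemma IsPath.edges_nodup : ∀ {u v : V} {p : G.Walk u v}, p.IsPath → p.edges.Nodup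
  | _, _, .nil _, _ => List.nodup_nil
  | _, _, .cons e h p, hp => by
      rw [IsPath, verts, List.nodup_cons] at hp
      refine List.nodup_cons.mpr ⟨fun he => hp.1 ?_, IsPath.edges_nodup hp.2⟩
      exact p.mem_verts_of_mem_ends he (h ▸ Sym2.mem_mk_left _ _)

lemma IsPath.exists_isPath_of_mem_verts : ∀ {v w : V} {q : G.Walk v w}, q.IsPath →
    ∀ {u : V}, u ∈ q.verts → ∃ q' : G.Walk u w, q'.IsPath ∧ q'.edges ⊆ q.edges
  | _, _, .nil _, hq, _, hu => by
      rw [verts, List.mem_singleton] at hu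
      subst hu
      exact ⟨.nil _, hq, List.Subset.refl _⟩
  | _, _, .cons e h p, hq, _, hu => by
      rw [verts, List.mem_cons] at hu
      rcases hu with rfl | hu
      · exact ⟨.cons e h p, hq, List.Subset.refl _⟩
      · rw [IsPath, verts, List.nodup_cons] at hq
        obtain ⟨q', hq', hsub⟩ := IsPath.exists_isPath_of_mem_verts hq.2 hu
        exact ⟨q', hq', List.Subset.trans hsub (List.subset_cons_self _ _)⟩

lemma exists_isPath_edges_subset : ∀ {u v : V} (p : G.Walk u v),
    ∃ q : G.Walk u v, q.IsPath ∧ q.edges ⊆ p.edges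
  | _, _, .nil v => ⟨.nil v, List.nodup_singleton _, List.Subset.refl _⟩
  | u, _, .cons e h p => by
      obtain ⟨q, hq, hsub⟩ := exists_isPath_edges_subset p
      by_cases hu : u ∈ q.verts
      · obtain ⟨q', hq', hsub'⟩ := hq.exists_isPath_of_mem_verts hu
        exact ⟨q', hq',
          List.Subset.trans (List.Subset.trans hsub' hsub) (List.subset_cons_self _ _)⟩
      · exact ⟨.cons e h q, List.nodup_cons.mpr ⟨hu, hq⟩, List.cons_subset_cons _ hsub⟩

def append : ∀ {u v w : V}, G.Walk u v → G.Walk v w → G.Walk u w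
  | _, _, _, .nil _, q => q
  | _, _, _, .cons e h p, q => .cons e h (p.append q)

lemma edges_append : ∀ {u v w : V} (p : G.Walk u v) (q : G.Walk v w),
    (p.append q).edges = p.edges ++ q.edges
  | _, _, _, .nil _, _ => rfl
  | _, _, _, .cons e _ p, q => congrArg (e :: ·) (edges_append p q)

lemma IsPath.isSimpleCycleOn_cons [DecidableEq E] {u v : V} {q : G.Walk v u} (hq : q.IsPath)
    {e : E} (he : e ∉ q.edges) (h : G.ends e = s(u, v)) :
    G.IsSimpleCycleOn (Walk.cons e h q).edges.toFinset := by
  refine ⟨u, .cons e h q, List.cons_ne_nil _ _, List.nodup_cons.mpr ⟨he, hq.edges_nodup⟩,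
    ?_, rfl⟩
  have hnd : (q.verts.dropLast ++ [u]).Nodup := q.verts_eq_dropLast_append ▸ hq
  rw [verts, List.dropLast_cons_of_ne_nil (List.ne_nil_of_mem q.start_mem_verts)]
  exact List.nodup_append_comm.mp hnd

end Walk

lemma ReachAvoid.exists_walk {F : Set E} {u v : V} (h : G.ReachAvoid F u v) :
    ∃ p : G.Walk u v, ∀ e ∈ p.edges, e ∉ F := by
  induction h with
  | refl => exact ⟨.nil _, fun _ he => absurd he List.not_mem_nil⟩
  | tail e he hvw _ ih =>
      obtain ⟨p, hp⟩ := ih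
      refine ⟨p.append (.cons e hvw (.nil _)), fun f hf => ?_⟩
      rw [Walk.edges_append, List.mem_append] at hf
      rcases hf with hf | hf
      · exact hp f hf
      · rw [List.mem_singleton.mp hf]; exact he

lemma ReachAvoid.map {V' : Type} {G' : Multigraph V' E} (f : V → V')
    (hf : ∀ e, G'.ends e = (G.ends e).map f) {F : Set E} {u v : V}
    (h : G.ReachAvoid F u v) : G'.ReachAvoid F (f u) (f v) := by
  induction h with
  | refl => exact .refl _
  | tail e he hvw _ ih => exact .tail e he (by rw [hf, hvw, Sym2.map_mk]) ih

lemma TwoEdgeConnected.map {V' : Type} {G' : Multigraph V' E} (f : V → V')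
    (hsurj : Function.Surjective f) (hf : ∀ e, G'.ends e = (G.ends e).map f)
    (hG : G.TwoEdgeConnected) : G'.TwoEdgeConnected := by
  refine ⟨fun x y => ?_, fun e x y => ?_⟩ <;>
    obtain ⟨⟨u, rfl⟩, ⟨v, rfl⟩⟩ := And.intro (hsurj x) (hsurj y)
  · exact (hG.1 u v).map f hf
  · exact (hG.2 e u v).map f hf

lemma TwoEdgeConnected.exists_isSimpleCycleOn_mem [DecidableEq E] (hG : G.TwoEdgeConnected)
    (e : E) : ∃ S, G.IsSimpleCycleOn S ∧ e ∈ S := by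
  obtain ⟨⟨u, v⟩, huv⟩ := Sym2.mk_surjective (G.ends e)
  obtain ⟨p, hp⟩ := (hG.2 e v u).exists_walk
  obtain ⟨q, hq, hsub⟩ := p.exists_isPath_edges_subset
  have he : e ∉ q.edges := fun he => hp e (hsub he) rfl
  exact ⟨_, hq.isSimpleCycleOn_cons he huv.symm, List.mem_toFinset.mpr List.mem_cons_self⟩

namespace Embedding

variable {W F : Type} {H : Multigraph W F}

def mapWalk (φ : H.Embedding G) : ∀ {u v : W}, H.Walk u v → G.Walk (φ.vmap u) (φ.vmap v)
  | _, _, .nil _ => .nil _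
  | _, _, .cons e h p => .cons (φ.emap e) (by rw [φ.ends_map, h, Sym2.map_mk]) (φ.mapWalk p)

lemma edges_mapWalk (φ : H.Embedding G) : ∀ {u v : W} (p : H.Walk u v),
    (φ.mapWalk p).edges = p.edges.map φ.emap
  | _, _, .nil _ => rfl
  | _, _, .cons e _ p => congrArg (φ.emap e :: ·) (φ.edges_mapWalk p)

lemma verts_mapWalk (φ : H.Embedding G) : ∀ {u v : W} (p : H.Walk u v),
    (φ.mapWalk p).verts = p.verts.map φ.vmap
  | _, _, .nil _ => rfl
  | u, _, .cons _ _ p => congrArg (φ.vmap u :: ·) (φ.verts_mapWalk p)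

lemma isSimpleCycleOn_image [DecidableEq E] [DecidableEq F] (φ : H.Embedding G) {S : Finset F}
    (hS : H.IsSimpleCycleOn S) : G.IsSimpleCycleOn (S.image φ.emap) := by
  obtain ⟨v, p, hne, hnd, hvd, rfl⟩ := hS
  refine ⟨φ.vmap v, φ.mapWalk p, ?_, ?_, ?_, ?_⟩
  · simpa [edges_mapWalk] using hne
  · rw [edges_mapWalk]; exact hnd.map φ.emap_inj
  · rw [verts_mapWalk, ← List.map_dropLast]; exact hvd.map φ.vmap_inj
  · ext; simp [edges_mapWalk]

lemma isCactus [DecidableEq E] [DecidableEq F] (φ : H.Embedding G) (hG : G.IsCactus)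
    (hH : H.TwoEdgeConnected) : H.IsCactus := by
  refine ⟨hH.1, fun f => ?_⟩
  obtain ⟨S, hS, hfS⟩ := hH.exists_isSimpleCycleOn_mem f
  refine ⟨S, ⟨hS, hfS⟩, fun S' ⟨hS', hfS'⟩ => Finset.image_injective φ.emap_inj ?_⟩
  exact (hG.2 (φ.emap f)).unique ⟨φ.isSimpleCycleOn_image hS', Finset.mem_image_of_mem _ hfS'⟩
    ⟨φ.isSimpleCycleOn_image hS, Finset.mem_image_of_mem _ hfS⟩

end Embedding

end Multigraph

namespace Multidigraph

variable {V E : Type}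

lemma DiWalk.exists_mem_edges_src_eq {D : Multidigraph V E} :
    ∀ {u v : V} (p : D.DiWalk u v), p.edges ≠ [] → ∃ e ∈ p.edges, D.src e = u
  | _, _, .nil _, hne => absurd rfl hne
  | _, _, .cons e hs _ _, _ => ⟨e, List.mem_cons_self, hs⟩

lemma twoEdgeConnected_quot {D : Multidigraph V E} (hD : D.toMultigraph.TwoEdgeConnected)
    (σ : Setoid V) : (D.quot σ).toMultigraph.TwoEdgeConnected :=
  hD.map (Quotient.mk σ) Quotient.mk_surjective fun _ => rfl

namespace Embedding

variable {W F : Type} {H : Multidigraph W F} {G : Multidigraph V E}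

def toMultigraph (φ : H.Embedding G) : H.toMultigraph.Embedding G.toMultigraph where
  vmap := φ.vmap
  emap := φ.emap
  vmap_inj := φ.vmap_inj
  emap_inj := φ.emap_inj
  ends_map f := by
    show s(G.src _, G.tgt _) = Sym2.map _ s(_, _)
    rw [φ.src_map, φ.tgt_map, Sym2.map_mk]

def quot (φ : H.Embedding G) (σ : Setoid V) :
    (H.quot (σ.comap φ.vmap)).Embedding (G.quot σ) where
  vmap := Quotient.map φ.vmap fun _ _ h => h
  emap := φ.emap
  vmap_inj := by
    rintro ⟨a⟩ ⟨b⟩ h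
    exact Quotient.sound (Quotient.exact h : σ.r (φ.vmap a) (φ.vmap b))
  emap_inj := φ.emap_inj
  src_map f := congrArg (Quotient.mk σ) (φ.src_map f)
  tgt_map f := congrArg (Quotient.mk σ) (φ.tgt_map f)

lemma exists_diWalk_pullback (φ : H.Embedding G) : ∀ {x y : V} (p : G.DiWalk x y) {a b : W},
    x = φ.vmap a → y = φ.vmap b → (∀ e ∈ p.edges, e ∈ Set.range φ.emap) →
    ∃ q : H.DiWalk a b, p.edges = q.edges.map φ.emap ∧ p.verts = q.verts.map φ.vmap
  | _, _, .nil _, a, b, hx, hy, _ => by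
      obtain rfl : a = b := φ.vmap_inj (hx ▸ hy)
      exact ⟨.nil a, rfl, by rw [DiWalk.verts, hx]; rfl⟩
  | _, _, .cons e hs ht p, a, b, hx, hy, hrange => by
      obtain ⟨f, rfl⟩ := hrange e List.mem_cons_self
      obtain rfl : H.src f = a := φ.vmap_inj (by rw [← φ.src_map, hs, hx])
      obtain ⟨q, hedges, hverts⟩ := φ.exists_diWalk_pullback p (by rw [← ht, φ.tgt_map]) hy
        fun e' he' => hrange e' (List.mem_cons_of_mem _ he')
      refine ⟨.cons f rfl rfl q, ?_, ?_⟩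
      · rw [DiWalk.edges, hedges]; rfl
      · rw [DiWalk.verts, hverts, hx]; rfl

lemma isDiCycleOn_of_image [DecidableEq E] [DecidableEq F] (φ : H.Embedding G) {S : Finset F}
    (hS : G.IsDiCycleOn (S.image φ.emap)) : H.IsDiCycleOn S := by
  obtain ⟨v, p, hne, hnd, hvd, hp⟩ := hS
  have hrange : ∀ e ∈ p.edges, e ∈ Set.range φ.emap := fun e he => by
    obtain ⟨f, -, rfl⟩ := Finset.mem_image.mp (hp ▸ List.mem_toFinset.mpr he)
    exact ⟨f, rfl⟩
  obtain ⟨e, he, rfl⟩ := p.exists_mem_edges_src_eq hne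
  obtain ⟨f, rfl⟩ := hrange e he
  have hv : G.src (φ.emap f) = φ.vmap (H.src f) := φ.src_map f
  obtain ⟨q, hedges, hverts⟩ := φ.exists_diWalk_pullback p hv hv hrange
  refine ⟨H.src f, q, ?_, ?_, ?_, ?_⟩
  · exact fun hq => hne (by rw [hedges, hq]; rfl)
  · rw [hedges] at hnd; exact hnd.of_map
  · rw [hverts, ← List.map_dropLast] at hvd; exact hvd.of_map
  · refine Finset.image_injective φ.emap_inj ?_
    rw [← hp, hedges]; ext; simp

lemma isOrientedCactus [DecidableEq E] [DecidableEq F] (φ : H.Embedding G)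
    (hG : G.IsOrientedCactus) (hH : H.toMultigraph.TwoEdgeConnected) : H.IsOrientedCactus :=
  ⟨φ.toMultigraph.isCactus hG.1 hH, fun _ hS =>
    φ.isDiCycleOn_of_image (hG.2 _ (φ.toMultigraph.isSimpleCycleOn_image hS))⟩

end Embedding

end Multidigraph

/-- If `H` is a subgraph of the multidigraph `G` whose underlying
multigraph is two-edge-connected, and `π` is a partition whose quotient `G^π` is an
oriented cactus, then the quotient `H^{π|_W}` is also an oriented cactus. -/
theorem stmt_7 {V E W F : Type} [DecidableEq E] [DecidableEq F]
    (G : Multidigraph V E) (H : Multidigraph W F) (emb : H.Embedding G)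
    (htec : H.toMultigraph.TwoEdgeConnected) (σ : Setoid V)
    (hcactus : (G.quot σ).IsOrientedCactus) :
    (H.quot (σ.comap emb.vmap)).IsOrientedCactus :=
  (emb.quot σ).isOrientedCactus hcactus (Multidigraph.twoEdgeConnected_quot htec _)
end

section
/- Let t and t' be finite trees, each with at least two vertices and with designated roots ρ and ρ' of degree one, and let T be the graph obtained from their disjoint union by identifying ρ with ρ'. Let π be a solid partition of the vertex set of T such that the quotient T^π is a cactus. Then every leaf v ≠ ρ of t lies in the same block of π as some leaf v' ≠ ρ' of t', and (with the convention that ρ corresponds to ρ') π induces a bijection between the set of leaves of t and the set of leaves of t'. -/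
set_option autoImplicit false

/-!
Colour the edges of `T^π` by the tree they come from, and let `d₁ B`, `d₂ B` count the edge ends
of `t` and of `t'` at a block `B`. Solidity embeds `t` and `t'` into `T^π`, so `d₁`, `d₂` are
degrees in the trees and no cycle of the cactus is monochromatic: each cycle changes colour at
two or more blocks, while at a block `B` at most `min (d₁ B) (d₂ B)` cycles change colour because
cycles are edge-disjoint. Every block has even degree `d₁ B + d₂ B`, and the cactus has at least
`|E(T)| - #blocks + 1` cycles. With `#blocks = |V| + |V'| - #(blocks meeting both trees)` these
counts leave no slack, which forces `d₁ B = d₂ B` at every block meeting both trees. A leaf of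
one tree therefore shares its block with a vertex of degree one of the other tree.
-/

open Finset

open Fin.NatCast in
theorem Fin.exists_and_not_add_one {n : ℕ} {P : Fin (n + 1) → Prop} {i j : Fin (n + 1)}
    (hi : P i) (hj : ¬ P j) : ∃ a, P a ∧ ¬ P (a + 1) := by
  by_contra! h
  have key : ∀ d : ℕ, P (i + d) := by
    intro d
    induction d with
    | zero => simpa using hi
    | succ d ih => rw [Nat.cast_succ, ← add_assoc]; exact h _ ih
  apply hj
  simpa [Fin.cast_val_eq_self] using key (j - i : Fin (n + 1))

namespace Multigraph

variable {V W E F : Type}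

def mapVerts (G : Multigraph V E) (φ : V → W) : Multigraph W E :=
  ⟨fun e => (G.ends e).map φ⟩

def comapEdges (G : Multigraph V E) (g : F → E) : Multigraph V F :=
  ⟨fun f => G.ends (g f)⟩

theorem exists_ends_eq (G : Multigraph V E) (e : E) : ∃ x y, G.ends e = s(x, y) :=
  Sym2.ind (fun x y => ⟨x, y, rfl⟩) (G.ends e)

section Degree

variable [DecidableEq V]

def mult (G : Multigraph V E) (e : E) (v : V) : ℕ :=
  Sym2.lift ⟨fun a b => (if a = v then 1 else 0) + (if b = v then 1 else 0),
    fun _ _ => add_comm _ _⟩ (G.ends e)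

theorem degree_eq_sum_mult [Fintype E] (G : Multigraph V E) (v : V) :
    G.degree v = ∑ e, G.mult e v := rfl

theorem mult_of_ends_eq {G : Multigraph V E} {e : E} {x y : V} (h : G.ends e = s(x, y))
    (v : V) : G.mult e v = (if x = v then 1 else 0) + (if y = v then 1 else 0) := by
  rw [mult, h, Sym2.lift_mk]

theorem mult_pos_iff {G : Multigraph V E} {e : E} {v : V} : 0 < G.mult e v ↔ v ∈ G.ends e := by
  obtain ⟨x, y, h⟩ := G.exists_ends_eq e
  rw [mult_of_ends_eq h, h, Sym2.mem_iff]
  grind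

theorem sum_mult [Fintype V] (G : Multigraph V E) (e : E) : ∑ v, G.mult e v = 2 := by
  obtain ⟨x, y, h⟩ := G.exists_ends_eq e
  simp [mult_of_ends_eq h, Finset.sum_add_distrib]

theorem sum_degree [Fintype V] [Fintype E] (G : Multigraph V E) :
    ∑ v, G.degree v = 2 * Fintype.card E := by
  simp_rw [degree_eq_sum_mult]
  rw [Finset.sum_comm]
  simp [sum_mult, mul_comm]

theorem card_incident_le_degree [Fintype E] (G : Multigraph V E) (v : V) :
    #{e | v ∈ G.ends e} ≤ G.degree v := by
  rw [degree_eq_sum_mult, Finset.card_eq_sum_ones]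
  calc ∑ e ∈ {e | v ∈ G.ends e}, 1 ≤ ∑ e ∈ {e | v ∈ G.ends e}, G.mult e v :=
        Finset.sum_le_sum fun e he => mult_pos_iff.2 (Finset.mem_filter.1 he).2
    _ ≤ ∑ e, G.mult e v := Finset.sum_le_sum_of_subset (Finset.subset_univ _)

theorem exists_mem_ends_of_degree_pos [Fintype E] {G : Multigraph V E} {v : V}
    (h : 0 < G.degree v) : ∃ e, v ∈ G.ends e := by
  obtain ⟨e, -, he⟩ := Finset.exists_ne_zero_of_sum_ne_zero h.ne'
  exact ⟨e, mult_pos_iff.1 (Nat.pos_of_ne_zero he)⟩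

theorem degree_eq_degree_comapEdges_inl_add_inr {E₁ E₂ : Type} [Fintype E₁] [Fintype E₂]
    (G : Multigraph V (E₁ ⊕ E₂)) (v : V) :
    G.degree v = (G.comapEdges Sum.inl).degree v + (G.comapEdges Sum.inr).degree v :=
  Fintype.sum_sum_type _

section MapVerts

variable [DecidableEq W] {φ : V → W}

theorem mult_mapVerts_apply (hφ : Function.Injective φ) (G : Multigraph V E) (e : E) (v : V) :
    (G.mapVerts φ).mult e (φ v) = G.mult e v := by
  obtain ⟨x, y, h⟩ := G.exists_ends_eq e
  have h' : (G.mapVerts φ).ends e = s(φ x, φ y) := by simp [mapVerts, h]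
  simp [mult_of_ends_eq h, mult_of_ends_eq h', hφ.eq_iff]

theorem degree_mapVerts_apply [Fintype E] (hφ : Function.Injective φ) (G : Multigraph V E)
    (v : V) : (G.mapVerts φ).degree (φ v) = G.degree v :=
  Finset.sum_congr rfl fun e _ => mult_mapVerts_apply hφ G e v

end MapVerts

end Degree

theorem mem_range_of_degree_mapVerts_pos [DecidableEq W] [Fintype E] {φ : V → W}
    {G : Multigraph V E} {w : W} (h : 0 < (G.mapVerts φ).degree w) : w ∈ Set.range φ := by
  obtain ⟨e, he⟩ := exists_mem_ends_of_degree_pos h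
  obtain ⟨v, -, rfl⟩ := Sym2.mem_map.1 he
  exact ⟨v, rfl⟩


namespace Walk

variable {G : Multigraph V E}

theorem length_verts : ∀ {u w : V} (p : G.Walk u w), p.verts.length = p.edges.length + 1
  | _, _, .nil _ => rfl
  | _, _, .cons _ _ p => by simp [verts, edges, length_verts p]

theorem verts_getElem_zero {u w : V} (p : G.Walk u w) (h : 0 < p.verts.length) :
    p.verts[0] = u := by
  cases p <;> rfl

theorem verts_getElem_of_eq_length {u w : V} (p : G.Walk u w) {i : ℕ}
    (hi : i = p.edges.length) (h : i < p.verts.length) : p.verts[i] = w := by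
  subst hi
  induction p with
  | nil => rfl
  | cons _ _ p ih => exact ih _

theorem ends_getElem_edges : ∀ {u w : V} (p : G.Walk u w) (i : ℕ) (hi : i < p.edges.length),
    G.ends p.edges[i] =
      s(p.verts[i]'(by rw [length_verts]; omega), p.verts[i + 1]'(by rw [length_verts]; omega))
  | _, _, .cons _ he p, 0, _ => by
      simpa [edges, verts, verts_getElem_zero p] using he
  | _, _, .cons _ _ p, i + 1, hi => ends_getElem_edges p i (by simpa [edges] using hi)

theorem exists_ofFn : ∀ {m : ℕ} (vs : Fin (m + 1) → V) (es : Fin m → E) {w : V},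
    vs (Fin.last m) = w → (∀ i, G.ends (es i) = s(vs i.castSucc, vs i.succ)) →
    ∃ p : G.Walk (vs 0) w, p.edges = List.ofFn es ∧ p.verts = List.ofFn vs
  | 0, vs, es, _, rfl, _ => ⟨.nil _, by simp [edges], by simp [verts]⟩
  | m + 1, vs, es, _, hw, h => by
    obtain ⟨p, hpe, hpv⟩ := exists_ofFn (fun i => vs i.succ) (fun i => es i.succ) hw
      (fun i => h i.succ)
    refine ⟨.cons (es 0) (h 0) p, ?_, ?_⟩
    · show es 0 :: p.edges = _
      rw [hpe, List.ofFn_succ]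
    · show vs 0 :: p.verts = _
      rw [hpv, List.ofFn_succ (f := vs)]

end Walk

/-- A simple cycle of length `n + 1`, listed cyclically (the index `i + 1` wraps around). -/
def IsCycleFn (G : Multigraph V E) {n : ℕ} (es : Fin (n + 1) → E) (vs : Fin (n + 1) → V) :
    Prop :=
  Function.Injective es ∧ Function.Injective vs ∧ ∀ i, G.ends (es i) = s(vs i, vs (i + 1))

section Cycles

variable {G : Multigraph V E}

theorem IsSimpleCycleOn.exists_isCycleFn [DecidableEq E] {S : Finset E}
    (h : G.IsSimpleCycleOn S) :
    ∃ (n : ℕ) (es : Fin (n + 1) → E) (vs : Fin (n + 1) → V),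
      G.IsCycleFn es vs ∧ univ.image es = S := by
  obtain ⟨v, p, hne, hE, hV, rfl⟩ := h
  obtain ⟨n, hn⟩ := Nat.exists_eq_succ_of_ne_zero (List.length_pos_iff.2 hne).ne'
  have hlen := p.length_verts
  refine ⟨n, fun i => p.edges[(i : ℕ)], fun i => p.verts[(i : ℕ)], ⟨?_, ?_, ?_⟩, ?_⟩
  · exact fun i j hij => Fin.ext (hE.getElem_inj_iff.1 hij)
  · intro i j hij
    have hd : p.verts.dropLast.length = n + 1 := by simp; omega
    exact Fin.ext ((hV.getElem_inj_iff (hi := by omega) (hj := by omega)).1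
      (by simpa [List.getElem_dropLast] using hij))
  · intro i
    simp only [p.ends_getElem_edges i (by omega), Fin.val_add_one]
    split_ifs with hi
    · subst hi
      simp only [Fin.val_last]
      rw [p.verts_getElem_zero, p.verts_getElem_of_eq_length hn.symm]
    · rfl
  · ext e
    simp only [mem_image, mem_univ, true_and, List.mem_toFinset, List.mem_iff_getElem]
    exact ⟨fun ⟨a, ha⟩ => ⟨a, by omega, ha⟩, fun ⟨i, hi, h⟩ => ⟨⟨i, by omega⟩, h⟩⟩

theorem IsCycleFn.isSimpleCycleOn [DecidableEq E] {n : ℕ} {es : Fin (n + 1) → E}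
    {vs : Fin (n + 1) → V} (h : G.IsCycleFn es vs) : G.IsSimpleCycleOn (univ.image es) := by
  obtain ⟨hes, hvs, hends⟩ := h
  obtain ⟨p, hpe, hpv⟩ := Walk.exists_ofFn (G := G) (Fin.snoc vs (vs 0)) es
    (w := Fin.snoc (α := fun _ => V) vs (vs 0) 0) (by simp) (by
      intro i
      rw [hends i]
      cases i using Fin.lastCases with
      | last => simp [Fin.last_add_one]
      | cast j =>
        rw [Fin.coeSucc_eq_succ, Fin.succ_castSucc, Fin.snoc_castSucc, Fin.snoc_castSucc])
  refine ⟨_, p, ?_, ?_, ?_, ?_⟩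
  · simp [hpe]
  · exact hpe ▸ List.nodup_ofFn.2 hes
  · rw [hpv, List.ofFn_succ', List.concat_eq_append, List.dropLast_concat]
    simpa using List.nodup_ofFn.2 hvs
  · ext e
    simp [hpe, Fin.exists_fin_succ, eq_comm]

theorem IsCycleFn.of_comapEdges {g : F → E} (hg : Function.Injective g) {n : ℕ}
    {es : Fin (n + 1) → F} {vs : Fin (n + 1) → V} (h : (G.comapEdges g).IsCycleFn es vs) :
    G.IsCycleFn (g ∘ es) vs :=
  ⟨hg.comp h.1, h.2.1, h.2.2⟩

theorem IsCycleFn.of_mapVerts {φ : V → W} (hφ : Function.Injective φ) {n : ℕ}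
    {es : Fin (n + 1) → E} {vs : Fin (n + 1) → W} (h : (G.mapVerts φ).IsCycleFn es vs) :
    ∃ us, G.IsCycleFn es us := by
  obtain ⟨hes, hvs, hends⟩ := h
  have hrange : ∀ i, vs i ∈ Set.range φ := fun i => by
    have hi : vs i ∈ (G.ends (es i)).map φ := by
      rw [show (G.ends (es i)).map φ = _ from hends i]
      exact Sym2.mem_mk_left _ _
    obtain ⟨v, -, hv⟩ := Sym2.mem_map.1 hi
    exact ⟨v, hv⟩
  choose us hus using hrange
  refine ⟨us, hes, fun i j hij => hvs (by rw [← hus i, ← hus j, hij]), fun i => ?_⟩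
  apply Sym2.map.injective hφ
  rw [Sym2.map_mk, hus, hus]
  exact hends i

def IsAcyclic [DecidableEq E] (G : Multigraph V E) : Prop :=
  ∀ S, ¬ G.IsSimpleCycleOn S

section Acyclic

variable [DecidableEq E]

theorem IsAcyclic.not_isCycleFn (hG : G.IsAcyclic) {n : ℕ} (es : Fin (n + 1) → E)
    (vs : Fin (n + 1) → V) : ¬ G.IsCycleFn es vs :=
  fun h => hG _ h.isSimpleCycleOn

theorem IsAcyclic.mapVerts {φ : V → W} (hφ : Function.Injective φ) (hG : G.IsAcyclic) :
    (G.mapVerts φ).IsAcyclic := fun _ hS => by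
  obtain ⟨n, es, vs, h, -⟩ := hS.exists_isCycleFn
  obtain ⟨us, hus⟩ := h.of_mapVerts hφ
  exact hG.not_isCycleFn es us hus

theorem IsAcyclic.not_isDiag (hG : G.IsAcyclic) (e : E) : ¬ (G.ends e).IsDiag := by
  obtain ⟨x, y, h⟩ := G.exists_ends_eq e
  rw [h, Sym2.mk_isDiag_iff]
  rintro rfl
  exact hG _ ⟨x, .cons e h (.nil x), by simp [Walk.edges], by simp [Walk.edges], by
    simp [Walk.verts], rfl⟩

theorem IsAcyclic.injective_ends (hG : G.IsAcyclic) : Function.Injective G.ends := by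
  intro e f hef
  by_contra hne
  obtain ⟨x, y, h⟩ := G.exists_ends_eq e
  have hxy : x ≠ y := fun hxy => hG.not_isDiag e (by rw [h, hxy, Sym2.mk_isDiag_iff])
  have hf : G.ends f = s(y, x) := by rw [← hef, h, Sym2.eq_swap]
  exact hG _ ⟨x, .cons e h (.cons f hf (.nil x)), by simp [Walk.edges],
    by simp [Walk.edges, hne], by simp [Walk.verts, hxy], rfl⟩

end Acyclic

def toSimpleGraph (G : Multigraph V E) : SimpleGraph V where
  Adj u v := u ≠ v ∧ ∃ e, G.ends e = s(u, v)
  symm := ⟨fun _ _ ⟨h, e, he⟩ => ⟨h.symm, e, he.trans Sym2.eq_swap⟩⟩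
  loopless := ⟨fun _ h => h.1 rfl⟩

theorem toSimpleGraph_adj {u v : V} :
    G.toSimpleGraph.Adj u v ↔ u ≠ v ∧ ∃ e, G.ends e = s(u, v) :=
  Iff.rfl

theorem exists_ends_eq_of_mem_edgeSet {z : Sym2 V} (hz : z ∈ G.toSimpleGraph.edgeSet) :
    ∃ e, G.ends e = z := by
  induction z using Sym2.ind with
  | _ u v => exact (toSimpleGraph_adj.1 hz).2

theorem card_edgeSet_toSimpleGraph_le [Finite E] :
    Nat.card G.toSimpleGraph.edgeSet ≤ Nat.card E := by
  choose f hf using fun z : G.toSimpleGraph.edgeSet => exists_ends_eq_of_mem_edgeSet z.2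
  exact Nat.card_le_card_of_injective f fun a b h => Subtype.ext (by rw [← hf a, ← hf b, h])

theorem Connected.preconnected_toSimpleGraph (hG : G.Connected) :
    G.toSimpleGraph.Preconnected := by
  intro u v
  induction hG u v with
  | refl => rfl
  | @tail v w e _ hvw _ ih =>
    by_cases h : v = w
    · exact h ▸ ih
    · exact ih.trans (SimpleGraph.Adj.reachable (toSimpleGraph_adj.2 ⟨h, e, hvw⟩))

theorem Connected.card_le [Fintype V] [Fintype E] (hG : G.Connected) :
    Fintype.card V ≤ Fintype.card E + 1 := by
  cases isEmpty_or_nonempty V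
  · simp
  · have h := ((SimpleGraph.connected_iff _).2
      ⟨hG.preconnected_toSimpleGraph, ‹_›⟩).card_vert_le_card_edgeSet_add_one
    have := card_edgeSet_toSimpleGraph_le (G := G)
    simp only [Nat.card_eq_fintype_card] at h this
    omega

theorem Connected.degree_pos [DecidableEq V] [Fintype V] [Fintype E] (hG : G.Connected)
    (hV : 1 < Fintype.card V) (v : V) : 0 < G.degree v := by
  obtain ⟨w, hw⟩ := Fintype.exists_ne_of_one_lt_card hV v
  obtain ⟨p⟩ := hG.preconnected_toSimpleGraph v w
  obtain ⟨-, e, he⟩ := toSimpleGraph_adj.1 (p.adj_snd (SimpleGraph.Walk.not_nil_of_ne hw.symm))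
  refine lt_of_lt_of_le ?_ (G.card_incident_le_degree v)
  exact Finset.card_pos.2 ⟨e, by simp [he]⟩

noncomputable def Walk.ofSimpleGraph : ∀ {u v : V}, G.toSimpleGraph.Walk u v → G.Walk u v
  | _, _, .nil => .nil _
  | _, _, .cons h p =>
    .cons (toSimpleGraph_adj.1 h).2.choose (toSimpleGraph_adj.1 h).2.choose_spec (ofSimpleGraph p)

theorem Walk.map_ends_edges_ofSimpleGraph : ∀ {u v : V} (p : G.toSimpleGraph.Walk u v),
    (ofSimpleGraph p).edges.map G.ends = p.edges
  | _, _, .nil => rfl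
  | _, _, .cons h p => by
    simp [ofSimpleGraph, edges, map_ends_edges_ofSimpleGraph p,
      (toSimpleGraph_adj.1 h).2.choose_spec]

theorem Walk.verts_ofSimpleGraph : ∀ {u v : V} (p : G.toSimpleGraph.Walk u v),
    (ofSimpleGraph p).verts = p.support
  | _, _, .nil => rfl
  | _, _, .cons h p => by simp [ofSimpleGraph, verts, verts_ofSimpleGraph p]

theorem IsAcyclic.toSimpleGraph [DecidableEq E] (hG : G.IsAcyclic) :
    G.toSimpleGraph.IsAcyclic := by
  intro v p hp
  have hmap := Walk.map_ends_edges_ofSimpleGraph p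
  refine hG _ ⟨v, Walk.ofSimpleGraph p, fun h => ?_, ?_, ?_, rfl⟩
  · rw [h, List.map_nil, eq_comm, SimpleGraph.Walk.edges_eq_nil] at hmap
    exact hp.not_nil hmap
  · exact List.Nodup.of_map G.ends (hmap ▸ hp.edges_nodup)
  · rw [Walk.verts_ofSimpleGraph]
    exact hp.nodup_dropLast_support

theorem IsAcyclic.card_lt [DecidableEq E] [Fintype V] [Fintype E] [Nonempty V]
    (hG : G.IsAcyclic) : Fintype.card E < Fintype.card V := by
  obtain ⟨T, hGT, -, hT⟩ := SimpleGraph.connected_top.exists_isTree_le_of_le_of_isAcyclic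
    le_top hG.toSimpleGraph
  have hTcard := (SimpleGraph.isTree_iff_connected_and_card.1 hT).2
  have hET : Nat.card E ≤ Nat.card T.edgeSet := by
    refine Nat.card_le_card_of_injective (fun e => ⟨G.ends e, ?_⟩) fun e f h => ?_
    · apply SimpleGraph.edgeSet_mono hGT
      obtain ⟨x, y, h⟩ := G.exists_ends_eq e
      rw [h, SimpleGraph.mem_edgeSet]
      exact toSimpleGraph_adj.2
        ⟨fun hxy => hG.not_isDiag e (by rw [h, hxy, Sym2.mk_isDiag_iff]), e, h⟩
    · exact hG.injective_ends (congrArg Subtype.val h)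
  simp only [Nat.card_eq_fintype_card] at hTcard hET
  omega


theorem IsSimpleCycleOn.nonempty [DecidableEq E] {S : Finset E} (h : G.IsSimpleCycleOn S) :
    S.Nonempty := by
  obtain ⟨_, p, hne, -, -, rfl⟩ := h
  exact List.toFinset_nonempty_iff _ |>.2 hne

theorem IsCycleFn.sum_mult [DecidableEq V] {n : ℕ} {es : Fin (n + 1) → E}
    {vs : Fin (n + 1) → V} (h : G.IsCycleFn es vs) (v : V) :
    ∑ i, G.mult (es i) v = 2 * ∑ i, if vs i = v then 1 else 0 := by
  simp only [mult_of_ends_eq (h.2.2 _), Finset.sum_add_distrib, two_mul]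
  congr 1
  exact Equiv.sum_comp (Equiv.addRight 1) fun i => if vs i = v then 1 else 0

section Cactus

variable [DecidableEq E] [Fintype E]

open Classical in
noncomputable def cycles (G : Multigraph V E) : Finset (Finset E) :=
  univ.filter G.IsSimpleCycleOn

theorem mem_cycles {S : Finset E} : S ∈ G.cycles ↔ G.IsSimpleCycleOn S := by
  simp [cycles]

theorem IsCactus.eq_of_mem (hG : G.IsCactus) {S S' : Finset E} {e : E}
    (hS : S ∈ G.cycles) (hS' : S' ∈ G.cycles) (he : e ∈ S) (he' : e ∈ S') : S = S' :=
  (hG.2 e).unique ⟨mem_cycles.1 hS, he⟩ ⟨mem_cycles.1 hS', he'⟩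

theorem IsCactus.sum_eq_sum_cycles {M : Type} [AddCommMonoid M] (hG : G.IsCactus) (f : E → M) :
    ∑ e, f e = ∑ S ∈ G.cycles, ∑ e ∈ S, f e := by
  rw [← Finset.sum_biUnion fun S hS S' hS' hne =>
    Finset.disjoint_left.2 fun e he he' => hne (hG.eq_of_mem hS hS' he he')]
  congr
  ext e
  obtain ⟨S, ⟨hS, he⟩, -⟩ := hG.2 e
  simpa using ⟨S, mem_cycles.2 hS, he⟩

theorem IsCactus.even_degree [DecidableEq V] (hG : G.IsCactus) (v : V) : Even (G.degree v) := by
  rw [degree_eq_sum_mult, hG.sum_eq_sum_cycles]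
  refine Finset.even_sum _ fun S hS => ?_
  obtain ⟨n, es, vs, h, rfl⟩ := (mem_cycles.1 hS).exists_isCycleFn
  rw [Finset.sum_image fun i _ j _ hij => h.1 hij, h.sum_mult]
  exact even_two_mul _

/-- Deleting one edge from every cycle leaves a forest. -/
theorem IsCactus.card_add_one_le [Fintype V] [Nonempty V] (hG : G.IsCactus) :
    Fintype.card E + 1 ≤ Fintype.card V + #G.cycles := by
  choose pick hpick using fun S : G.cycles => (mem_cycles.1 S.2).nonempty
  set P := univ.image pick
  have hP : #P = #G.cycles := by
    rw [Finset.card_image_of_injective _ fun S S' (h : pick S = pick S') =>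
      Subtype.ext (hG.eq_of_mem S.2 S'.2 (hpick S) (h ▸ hpick S')), card_univ, Fintype.card_coe]
  have hforest : (G.comapEdges (Subtype.val : {e // e ∉ P} → E)).IsAcyclic := fun _ hS => by
    obtain ⟨n, es, vs, h, -⟩ := hS.exists_isCycleFn
    have hS₀ := mem_cycles.2 (h.of_comapEdges Subtype.val_injective).isSimpleCycleOn
    obtain ⟨i, -, hi⟩ := Finset.mem_image.1 (hpick ⟨_, hS₀⟩)
    exact (es i).2 (by rw [show (es i).val = _ from hi]; exact mem_image_of_mem _ (mem_univ _))
  have hlt := hforest.card_lt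
  have hcompl : Fintype.card {e // e ∉ P} = Fintype.card E - #P := by
    simp [Fintype.card_subtype_compl, Fintype.card_coe]
  have : #P ≤ Fintype.card E := Finset.card_le_univ P
  omega

open Classical in
theorem IsCactus.card_cycles_incident_le [DecidableEq V] [Fintype F] (hG : G.IsCactus)
    (g : F → E) (v : V) :
    #{S ∈ G.cycles | ∃ f, g f ∈ S ∧ v ∈ G.ends (g f)} ≤ (G.comapEdges g).degree v := by
  refine (card_le_card_of_forall_subsingleton (fun S f => g f ∈ S) (t := {f | v ∈ G.ends (g f)})
    (fun S hS => ?_) fun f _ S hS S' hS' => ?_).trans ((G.comapEdges g).card_incident_le_degree v)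
  · obtain ⟨f, hfS, hf⟩ := (mem_filter.1 hS).2
    exact ⟨f, by simpa [comapEdges] using hf, hfS⟩
  · exact hG.eq_of_mem (mem_filter.1 hS.1).1 (mem_filter.1 hS'.1).1 hS.2 hS'.2

end Cactus

end Cycles

section Bicoloured

variable {E₁ E₂ : Type} {G : Multigraph V (E₁ ⊕ E₂)}

def IsMixedAt (G : Multigraph V (E₁ ⊕ E₂)) (S : Finset (E₁ ⊕ E₂)) (v : V) : Prop :=
  (∃ e, .inl e ∈ S ∧ v ∈ G.ends (.inl e)) ∧ (∃ e, .inr e ∈ S ∧ v ∈ G.ends (.inr e))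

theorem IsCycleFn.isMixedAt [DecidableEq E₁] [DecidableEq E₂] {n : ℕ}
    {es : Fin (n + 1) → E₁ ⊕ E₂} {vs : Fin (n + 1) → V}
    (h : G.IsCycleFn es vs) {a : Fin (n + 1)} (ha : (es a).isLeft ≠ (es (a + 1)).isLeft) :
    G.IsMixedAt (univ.image es) (vs (a + 1)) := by
  have hmem : ∀ i, es i ∈ univ.image es := fun i => mem_image_of_mem _ (mem_univ _)
  have h₁ : vs (a + 1) ∈ G.ends (es a) := by rw [h.2.2]; exact Sym2.mem_mk_right _ _
  have h₂ : vs (a + 1) ∈ G.ends (es (a + 1)) := by rw [h.2.2]; exact Sym2.mem_mk_left _ _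
  have hm₁ := hmem a
  have hm₂ := hmem (a + 1)
  rcases hc : es a with e | e <;> rcases hc' : es (a + 1) with e' | e' <;>
    simp only [hc, hc', Sum.isLeft_inl, Sum.isLeft_inr, ne_eq, not_true_eq_false]
      at ha h₁ h₂ hm₁ hm₂
  · exact ⟨⟨e, hm₁, h₁⟩, ⟨e', hm₂, h₂⟩⟩
  · exact ⟨⟨e', hm₂, h₂⟩, ⟨e, hm₁, h₁⟩⟩

theorem IsAcyclic.exists_isLeft_of_isCycleFn [DecidableEq E₂]
    (hG : (G.comapEdges Sum.inr).IsAcyclic) {n : ℕ}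
    {es : Fin (n + 1) → E₁ ⊕ E₂} {vs : Fin (n + 1) → V} (h : G.IsCycleFn es vs) :
    ∃ i, (es i).isLeft := by
  by_contra! hr
  choose e he using fun i => Sum.isRight_iff.1 (Sum.not_isLeft.1 (by simpa using hr i))
  refine hG.not_isCycleFn e vs ⟨fun i j hij => h.1 (by rw [he, he, hij]), h.2.1, fun i => ?_⟩
  simpa [comapEdges, he] using h.2.2 i

theorem IsAcyclic.exists_isRight_of_isCycleFn [DecidableEq E₁]
    (hG : (G.comapEdges Sum.inl).IsAcyclic) {n : ℕ}
    {es : Fin (n + 1) → E₁ ⊕ E₂} {vs : Fin (n + 1) → V} (h : G.IsCycleFn es vs) :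
    ∃ i, ¬ (es i).isLeft := by
  by_contra! hl
  choose e he using fun i => Sum.isLeft_iff.1 (hl i)
  refine hG.not_isCycleFn e vs ⟨fun i j hij => h.1 (by rw [he, he, hij]), h.2.1, fun i => ?_⟩
  simpa [comapEdges, he] using h.2.2 i

open Classical in
/-- Both colours occur on the cycle, so going around it the colour changes at least twice. -/
theorem IsSimpleCycleOn.one_lt_card_isMixedAt [DecidableEq E₁] [DecidableEq E₂] [Fintype V]
    (h₁ : (G.comapEdges Sum.inl).IsAcyclic) (h₂ : (G.comapEdges Sum.inr).IsAcyclic)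
    {S : Finset (E₁ ⊕ E₂)} (hS : G.IsSimpleCycleOn S) : 1 < #{v | G.IsMixedAt S v} := by
  obtain ⟨n, es, vs, h, rfl⟩ := hS.exists_isCycleFn
  obtain ⟨i, hi⟩ := h₂.exists_isLeft_of_isCycleFn h
  obtain ⟨j, hj⟩ := h₁.exists_isRight_of_isCycleFn h
  obtain ⟨a, ha, ha'⟩ := Fin.exists_and_not_add_one (P := fun i => (es i).isLeft) hi hj
  obtain ⟨b, hb, hb'⟩ := Fin.exists_and_not_add_one (P := fun i => ¬ (es i).isLeft) hj (by simpa)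
  refine Finset.one_lt_card.2 ⟨vs (a + 1), ?_, vs (b + 1), ?_, fun hab => ?_⟩
  · exact mem_filter.2 ⟨mem_univ _, h.isMixedAt (by simp_all)⟩
  · exact mem_filter.2 ⟨mem_univ _, h.isMixedAt (by simp_all)⟩
  · rw [(add_left_inj _).1 (h.2.1 hab)] at ha
    exact hb ha

variable [DecidableEq V] [Fintype V] [DecidableEq E₁] [DecidableEq E₂] [Fintype E₁] [Fintype E₂]

open Classical in
theorem IsCactus.two_mul_card_cycles_le (hG : G.IsCactus)
    (h₁ : (G.comapEdges Sum.inl).IsAcyclic) (h₂ : (G.comapEdges Sum.inr).IsAcyclic) :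
    2 * #G.cycles ≤
      ∑ v, min ((G.comapEdges Sum.inl).degree v) ((G.comapEdges Sum.inr).degree v) :=
  calc 2 * #G.cycles = ∑ S ∈ G.cycles, 2 := by rw [sum_const, smul_eq_mul, mul_comm]
    _ ≤ ∑ S ∈ G.cycles, #{v | G.IsMixedAt S v} :=
      sum_le_sum fun S hS => (mem_cycles.1 hS).one_lt_card_isMixedAt h₁ h₂
    _ = ∑ v, #{S ∈ G.cycles | G.IsMixedAt S v} :=
      sum_card_bipartiteAbove_eq_sum_card_bipartiteBelow _
    _ ≤ _ := sum_le_sum fun v _ => le_min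
      ((card_le_card fun S hS => by simp only [mem_filter] at hS ⊢; exact ⟨hS.1, hS.2.1⟩).trans
        (hG.card_cycles_incident_le Sum.inl v))
      ((card_le_card fun S hS => by simp only [mem_filter] at hS ⊢; exact ⟨hS.1, hS.2.2⟩).trans
        (hG.card_cycles_incident_le Sum.inr v))

open Classical in
/-- Parity gives `d₁ + d₂ ≥ 2 min d₁ d₂ + 2` off the set `M` of vertices met by both colours;
summed over all vertices this is already as large as `2 |E|` allows, by `2 #cycles ≤ ∑ min`
and `#cycles ≥ |E| - |V| + 1`, so there is no room for `d₁ ≠ d₂` on `M`. -/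
theorem IsCactus.degree_inl_eq_degree_inr (hG : G.IsCactus)
    (h₁ : (G.comapEdges Sum.inl).IsAcyclic) (h₂ : (G.comapEdges Sum.inr).IsAcyclic)
    (hpos : ∀ v, 0 < G.degree v)
    (hc₁ : #{v | 0 < (G.comapEdges Sum.inl).degree v} ≤ Fintype.card E₁ + 1)
    (hc₂ : #{v | 0 < (G.comapEdges Sum.inr).degree v} ≤ Fintype.card E₂ + 1) {v : V}
    (hv₁ : 0 < (G.comapEdges Sum.inl).degree v) (hv₂ : 0 < (G.comapEdges Sum.inr).degree v) :
    (G.comapEdges Sum.inl).degree v = (G.comapEdges Sum.inr).degree v := by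
  set d₁ := (G.comapEdges Sum.inl).degree
  set d₂ := (G.comapEdges Sum.inr).degree
  have hdeg : ∀ w, G.degree w = d₁ w + d₂ w := G.degree_eq_degree_comapEdges_inl_add_inr
  have heven : ∀ w, Even (d₁ w + d₂ w) := fun w => hdeg w ▸ hG.even_degree w
  have hpos' : ∀ w, 0 < d₁ w + d₂ w := fun w => hdeg w ▸ hpos w
  set M : Finset V := {w | 0 < d₁ w ∧ 0 < d₂ w}
  have : Nonempty V := ⟨v⟩
  have hsum : ∑ w, (d₁ w + d₂ w) = 2 * (Fintype.card E₁ + Fintype.card E₂) := by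
    simp_rw [← hdeg]
    rw [sum_degree, Fintype.card_sum]
  have hcyc : 2 * #G.cycles ≤ ∑ w, min (d₁ w) (d₂ w) := hG.two_mul_card_cycles_le h₁ h₂
  have hE := hG.card_add_one_le
  rw [Fintype.card_sum] at hE
  have hM : #M + Fintype.card V = #{w | 0 < d₁ w} + #{w | 0 < d₂ w} := by
    rw [← card_union_add_card_inter, ← filter_or, ← filter_and, add_comm,
      filter_true_of_mem fun w _ => by have := hpos' w; omega, card_univ]
  have hMc : #{w | w ∉ M} + #M = Fintype.card V := by
    rw [filter_not, filter_mem_eq_inter, univ_inter, card_sdiff_of_subset (subset_univ _),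
      card_univ]
    have := card_le_univ M
    omega
  have hlow : ∀ w, 2 * min (d₁ w) (d₂ w) + 2 * (if w ∉ M then 1 else 0) ≤ d₁ w + d₂ w := by
    intro w
    obtain ⟨k, hk⟩ := heven w
    have := hpos' w
    split_ifs with hw <;> simp only [M, mem_filter, mem_univ, true_and] at hw <;> omega
  by_contra hne
  have hlt : ∑ w, (2 * min (d₁ w) (d₂ w) + 2 * (if w ∉ M then 1 else 0)) <
      ∑ w, (d₁ w + d₂ w) := by
    refine sum_lt_sum (fun w _ => hlow w) ⟨v, mem_univ _, ?_⟩
    obtain ⟨k, hk⟩ := heven v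
    have hvM : v ∈ M := by simp [M, hv₁, hv₂]
    simp only [hvM, not_true_eq_false, if_false]
    omega
  rw [sum_add_distrib, ← mul_sum, ← mul_sum, sum_boole, Nat.cast_id] at hlt
  omega

end Bicoloured

theorem card_filter_degree_mapVerts_pos_le [DecidableEq W] [Fintype W] [Fintype V] [Fintype E]
    (G : Multigraph V E) (φ : V → W) :
    #{w | 0 < (G.mapVerts φ).degree w} ≤ Fintype.card V := by
  classical
  calc _ ≤ #(univ.image φ) := card_le_card fun w hw => by
        obtain ⟨v, rfl⟩ := mem_range_of_degree_mapVerts_pos (mem_filter.1 hw).2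
        exact mem_image_of_mem _ (mem_univ _)
    _ ≤ Fintype.card V := card_image_le

theorem IsLeaf.exists_of_mapVerts {V₁ V₂ E₁ E₂ W : Type} [DecidableEq V₁] [DecidableEq V₂]
    [DecidableEq W] [Fintype E₁] [Fintype E₂] {G₁ : Multigraph V₁ E₁} {G₂ : Multigraph V₂ E₂}
    {φ₁ : V₁ → W} {φ₂ : V₂ → W} (hφ₁ : Function.Injective φ₁) (hφ₂ : Function.Injective φ₂)
    (h : ∀ w, (G₁.mapVerts φ₁).degree w = 1 → (G₂.mapVerts φ₂).degree w = 1) {v : V₁}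
    (hv : G₁.IsLeaf v) : ∃ v', G₂.IsLeaf v' ∧ φ₂ v' = φ₁ v := by
  have h₂ := h (φ₁ v) ((degree_mapVerts_apply hφ₁ G₁ v).trans hv)
  obtain ⟨v', hv'⟩ := mem_range_of_degree_mapVerts_pos (h₂ ▸ Nat.one_pos)
  exact ⟨v', by rw [IsLeaf, ← degree_mapVerts_apply hφ₂, hv', h₂], hv'⟩

section Wedge

variable {V' E' : Type} [DecidableEq V'] (t : Multigraph V E) (t' : Multigraph V' E')
  (ρ : V) (ρ' : V') (σ : Setoid (V ⊕ {x : V' // x ≠ ρ'}))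

theorem comapEdges_inl_quot_wedge :
    ((t.wedge t' ρ ρ').quot σ).comapEdges Sum.inl = t.mapVerts (Quotient.mk σ ∘ Sum.inl) := by
  simp only [comapEdges, quot, wedge, mapVerts, Sym2.map_map]

theorem comapEdges_inr_quot_wedge :
    ((t.wedge t' ρ ρ').quot σ).comapEdges Sum.inr =
      t'.mapVerts (Quotient.mk σ ∘ wedgeJ ρ ρ') := by
  simp only [comapEdges, quot, wedge, mapVerts, Sym2.map_map]

theorem degree_mapVerts_eq_one_iff_of_isCactus [DecidableEq V] [DecidableEq E] [DecidableEq E']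
    [Fintype V] [Fintype V'] [Fintype E] [Fintype E'] [DecidableEq (Quotient σ)]
    (ht : t.IsTree) (ht' : t'.IsTree) (hV : 1 < Fintype.card V) (hV' : 1 < Fintype.card V')
    (hφ : Function.Injective (Quotient.mk σ ∘ Sum.inl))
    (hφ' : Function.Injective (Quotient.mk σ ∘ wedgeJ ρ ρ'))
    (hG : ((t.wedge t' ρ ρ').quot σ).IsCactus) (B : Quotient σ) :
    (t.mapVerts (Quotient.mk σ ∘ Sum.inl)).degree B = 1 ↔
      (t'.mapVerts (Quotient.mk σ ∘ wedgeJ ρ ρ')).degree B = 1 := by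
  classical
  have hL := comapEdges_inl_quot_wedge t t' ρ ρ' σ
  have hR := comapEdges_inr_quot_wedge t t' ρ ρ' σ
  have hdeg : ∀ B, ((t.wedge t' ρ ρ').quot σ).degree B =
      (t.mapVerts (Quotient.mk σ ∘ Sum.inl)).degree B +
        (t'.mapVerts (Quotient.mk σ ∘ wedgeJ ρ ρ')).degree B := fun B => by
    rw [degree_eq_degree_comapEdges_inl_add_inr, hL, hR]
  have hpos : ∀ B, 0 < ((t.wedge t' ρ ρ').quot σ).degree B := by
    intro B
    rw [hdeg]
    induction B using Quotient.ind with
    | _ x =>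
      rcases x with u | ⟨u', hu'⟩
      · have h := degree_mapVerts_apply hφ t u ▸ ht.1.degree_pos hV u
        exact lt_of_lt_of_le h (Nat.le_add_right _ _)
      · have h := degree_mapVerts_apply hφ' t' u' ▸ ht'.1.degree_pos hV' u'
        simp only [Function.comp_apply, wedgeJ, dif_neg hu'] at h
        exact lt_of_lt_of_le h (Nat.le_add_left _ _)
  have hbal := hG.degree_inl_eq_degree_inr (v := B) (by rw [hL]; exact IsAcyclic.mapVerts hφ ht.2)
    (by rw [hR]; exact IsAcyclic.mapVerts hφ' ht'.2) hpos
    (by rw [hL]; exact (card_filter_degree_mapVerts_pos_le _ _).trans ht.1.card_le)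
    (by rw [hR]; exact (card_filter_degree_mapVerts_pos_le _ _).trans ht'.1.card_le)
  rw [hL, hR] at hbal
  obtain ⟨k, hk⟩ := hdeg B ▸ hG.even_degree B
  constructor <;> intro h
  · have := hbal (by omega) (by omega)
    omega
  · have := hbal (by omega) (by omega)
    omega

end Wedge

end Multigraph

open Multigraph in
theorem stmt_9_general {V E V' E' : Type} [Fintype V] [Fintype V'] [Fintype E] [Fintype E']
    [DecidableEq V] [DecidableEq V'] [DecidableEq E] [DecidableEq E']
    (t : Multigraph V E) (t' : Multigraph V' E') (ρ : V) (ρ' : V')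
    (ht : t.IsTree) (ht' : t'.IsTree)
    (hV : 1 < Fintype.card V) (hV' : 1 < Fintype.card V')
    (σ : Setoid (V ⊕ {x : V' // x ≠ ρ'}))
    (hsolid₁ : ∀ a b : V, σ.r (Sum.inl a) (Sum.inl b) → a = b)
    (hsolid₂ : ∀ a b : V', σ.r (wedgeJ ρ ρ' a) (wedgeJ ρ ρ' b) → a = b)
    (hcactus : ((t.wedge t' ρ ρ').quot σ).IsCactus) :
    (∀ v : V, t.IsLeaf v → v ≠ ρ →
        ∃ v' : V', t'.IsLeaf v' ∧ v' ≠ ρ' ∧ σ.r (Sum.inl v) (wedgeJ ρ ρ' v')) ∧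
    (∀ v : V, t.IsLeaf v → ∃! v' : V', t'.IsLeaf v' ∧ σ.r (Sum.inl v) (wedgeJ ρ ρ' v')) ∧
    (∀ v' : V', t'.IsLeaf v' → ∃! v : V, t.IsLeaf v ∧ σ.r (Sum.inl v) (wedgeJ ρ ρ' v')) := by
  classical
  have hφ : Function.Injective (Quotient.mk σ ∘ Sum.inl) :=
    fun a b h => hsolid₁ a b (Quotient.exact h)
  have hφ' : Function.Injective (Quotient.mk σ ∘ wedgeJ ρ ρ') :=
    fun a b h => hsolid₂ a b (Quotient.exact h)
  have hiff := degree_mapVerts_eq_one_iff_of_isCactus t t' ρ ρ' σ ht ht' hV hV' hφ hφ' hcactus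
  have hmatch : ∀ v, t.IsLeaf v → ∃ v', t'.IsLeaf v' ∧ σ.r (Sum.inl v) (wedgeJ ρ ρ' v') :=
    fun v hv => by
      obtain ⟨v', hv', h⟩ := IsLeaf.exists_of_mapVerts hφ hφ' (fun B => (hiff B).1) hv
      exact ⟨v', hv', Quotient.exact h.symm⟩
  refine ⟨fun v hv hvρ => ?_, fun v hv => ?_, fun v' hv' => ?_⟩
  · obtain ⟨v', hv', h⟩ := hmatch v hv
    refine ⟨v', hv', ?_, h⟩
    rintro rfl
    exact hvρ (hsolid₁ v ρ (by rwa [wedgeJ, dif_pos rfl] at h))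
  · obtain ⟨v', hv', h⟩ := hmatch v hv
    exact ⟨v', ⟨hv', h⟩, fun y hy => hsolid₂ y v' (σ.iseqv.trans (σ.iseqv.symm hy.2) h)⟩
  · obtain ⟨v, hv, h⟩ := IsLeaf.exists_of_mapVerts hφ' hφ (fun B => (hiff B).2) hv'
    have h' : σ.r (Sum.inl v) (wedgeJ ρ ρ' v') := Quotient.exact h
    exact ⟨v, ⟨hv, h'⟩, fun y hy => hsolid₁ y v (σ.iseqv.trans hy.2 (σ.iseqv.symm h'))⟩

/-- Let `t, t'` be finite trees with designated roots `ρ, ρ'` of degree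
one, each with at least two vertices, and let `T` be the graph obtained by identifying
`ρ` with `ρ'`.  If `π` is a solid partition of the vertices of `T` whose quotient `T^π`
is a cactus, then every leaf `v ≠ ρ` of `t` lies in the same block of `π` as some leaf
`v' ≠ ρ'` of `t'`, and (with the convention `ρ ↔ ρ'`) `π` induces a bijection between
the leaves of `t` and the leaves of `t'`. -/
theorem stmt_9 {V E V' E' : Type} [Fintype V] [Fintype V'] [Fintype E] [Fintype E']
    [DecidableEq V] [DecidableEq V'] [DecidableEq E] [DecidableEq E']
    (t : Multigraph V E) (t' : Multigraph V' E') (ρ : V) (ρ' : V')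
    (ht : t.IsTree) (ht' : t'.IsTree)
    (hV : 1 < Fintype.card V) (hV' : 1 < Fintype.card V')
    (hρ : t.degree ρ = 1) (hρ' : t'.degree ρ' = 1)
    (σ : Setoid (V ⊕ {x : V' // x ≠ ρ'}))
    (hsolid₁ : ∀ a b : V, σ.r (Sum.inl a) (Sum.inl b) → a = b)
    (hsolid₂ : ∀ a b : V', σ.r (wedgeJ ρ ρ' a) (wedgeJ ρ ρ' b) → a = b)
    (hcactus : ((t.wedge t' ρ ρ').quot σ).IsCactus) :
    (∀ v : V, t.IsLeaf v → v ≠ ρ →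
        ∃ v' : V', t'.IsLeaf v' ∧ v' ≠ ρ' ∧ σ.r (Sum.inl v) (wedgeJ ρ ρ' v')) ∧
    (∀ v : V, t.IsLeaf v → ∃! v' : V', t'.IsLeaf v' ∧ σ.r (Sum.inl v) (wedgeJ ρ ρ' v')) ∧
    (∀ v' : V', t'.IsLeaf v' → ∃! v : V, t.IsLeaf v ∧ σ.r (Sum.inl v) (wedgeJ ρ ρ' v')) :=
  stmt_9_general t t' ρ ρ' ht ht' hV hV' σ hsolid₁ hsolid₂ hcactus
end
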